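/- arXiv:1203.4972 — 3 statements merged into one kernel-verified Lean document; each statement's English description precedes it below -/
import Mathlib

section
/- Suppose linear binary forms L_1,...,L_m (in two variables over the complex numbers) are pairwise non-proportional, and suppose 0 = G_1·L_1^{n-g_1+1} + ... + G_m·L_m^{n-g_m+1}, where each G_i is a binary form of degree g_i - 1 and the sum of the g_i is at most n+1. Then G_i = 0 for every i. -/
open MvPolynomial

noncomputable def contractOp (φ f : MvPolynomial (Fin 2) ℂ) : MvPolynomial (Fin 2) ℂ :=
  φ.support.sum fun m =>
    φ.coeff m • ((fun p => pderiv (0 : Fin 2) p)^[m 0]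
      ((fun p => pderiv (1 : Fin 2) p)^[m 1] f))

def IsLinearForm (L : MvPolynomial (Fin 2) ℂ) : Prop := L ≠ 0 ∧ L.IsHomogeneous 1

def Proportional (L L' : MvPolynomial (Fin 2) ℂ) : Prop := ∃ c : ℂ, L' = c • L

def IsGAD (n : ℕ) (f : MvPolynomial (Fin 2) ℂ) (m : ℕ)
    (L : Fin m → MvPolynomial (Fin 2) ℂ) (g : Fin m → ℕ)
    (G : Fin m → MvPolynomial (Fin 2) ℂ) : Prop :=
  (∀ i, IsLinearForm (L i)) ∧
  (∀ i j, i ≠ j → ¬ Proportional (L i) (L j)) ∧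
  (∀ i, 1 ≤ g i) ∧
  (∀ i, (G i).IsHomogeneous (g i - 1)) ∧
  f = ∑ i, G i * (L i) ^ (n - g i + 1)

def HasGADLength (n : ℕ) (f : MvPolynomial (Fin 2) ℂ) (s : ℕ) : Prop :=
  ∃ m L g G, IsGAD n f m L g G ∧ ∑ i, g i = s

/-!
Let `D` be the derivative along the direction killing `L₁`, so that `D L₁ = 0` while `D Lᵢ` is a
nonzero constant `cᵢ` for `i ≠ 1`. As `deg G₁ < g₁`, `D^{g₁}` annihilates the first summand, and
it sends `Gᵢ Lᵢ^e` to `Hᵢ Lᵢ^{e - g₁}` with `deg Hᵢ = deg Gᵢ`, where `Hᵢ = 0` forces `Gᵢ = 0`: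
one differentiation gives `D (G L^{e+1}) = (L D G + (e+1) c G) L^e`, and a relation
`L D G + k c G = 0` with `k ≥ 1` makes `L` divide `G` with a cofactor of lower degree satisfying
the same relation with `k + 1`. The bound `∑ gᵢ ≤ n + 1` keeps the exponents large enough for
an induction on the number of summands.
-/

namespace MvPolynomial

variable {σ R : Type*} [Fintype σ] [CommSemiring R] {v : σ → R} {φ L : MvPolynomial σ R}

noncomputable def directionalDeriv (v : σ → R) :
    Derivation R (MvPolynomial σ R) (MvPolynomial σ R) :=
  ∑ i, v i • pderiv i

lemma directionalDeriv_apply (v : σ → R) (φ : MvPolynomial σ R) :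
    directionalDeriv v φ = ∑ i, v i • pderiv i φ := by
  rw [directionalDeriv, ← Derivation.coeFnAddMonoidHom_apply, map_sum, Finset.sum_apply]
  rfl

protected lemma IsHomogeneous.directionalDeriv {n : ℕ} (h : φ.IsHomogeneous n) :
    (directionalDeriv v φ).IsHomogeneous (n - 1) := by
  rw [directionalDeriv_apply]
  refine IsHomogeneous.sum _ _ _ fun i _ => ?_
  rw [smul_eq_C_mul]
  exact h.pderiv.C_mul _

lemma IsHomogeneous.directionalDeriv_eq_zero (h : φ.IsHomogeneous 0) :
    directionalDeriv v φ = 0 := by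
  rw [← totalDegree_zero_iff_isHomogeneous, totalDegree_eq_zero_iff_eq_C] at h
  rw [h, ← algebraMap_eq, Derivation.map_algebraMap]

lemma IsHomogeneous.iterate_directionalDeriv_eq_zero {d k : ℕ} (h : φ.IsHomogeneous d)
    (hk : d < k) : (directionalDeriv v)^[k] φ = 0 := by
  induction k generalizing φ d with
  | zero => omega
  | succ k ih =>
    rw [Function.iterate_succ_apply]
    rcases d with _ | d
    · rw [h.directionalDeriv_eq_zero, iterate_map_zero]
    · exact ih h.directionalDeriv (by omega)

lemma IsHomogeneous.eq_sum_C_coeff_mul_X (h : φ.IsHomogeneous 1) :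
    φ = ∑ i, C (coeff (Finsupp.single i 1) φ) * X i := by
  classical
  rw [← mem_homogeneousSubmodule, homogeneousSubmodule_one_eq_span_X] at h
  induction h using Submodule.span_induction with
  | mem x hx =>
    obtain ⟨j, rfl⟩ := hx
    simp [coeff_X, Finsupp.single_left_inj]
  | zero => simp
  | add x y _ _ hx hy =>
    conv_lhs => rw [hx, hy]
    simp only [coeff_add, C_add, add_mul, Finset.sum_add_distrib]
  | smul r x _ hx =>
    conv_lhs => rw [hx]
    simp only [smul_eq_C_mul, coeff_C_mul, map_mul, Finset.mul_sum, mul_assoc]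

@[simp]
lemma directionalDeriv_X (i : σ) : directionalDeriv v (X i) = C (v i) := by
  classical
  simp [directionalDeriv_apply, pderiv_X, Pi.single_apply, smul_eq_C_mul]

lemma IsHomogeneous.directionalDeriv_eq_C (h : L.IsHomogeneous 1) :
    directionalDeriv v L = C (∑ i, v i * coeff (Finsupp.single i 1) L) := by
  conv_lhs => rw [h.eq_sum_C_coeff_mul_X]
  rw [map_sum, map_sum]
  refine Finset.sum_congr rfl fun i _ => ?_
  rw [← smul_eq_C_mul, Derivation.map_smul, directionalDeriv_X, smul_eq_C_mul, ← map_mul,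
    mul_comm]

lemma iterate_directionalDeriv_mul_pow_of_eq_zero (hL : directionalDeriv v L = 0)
    (G : MvPolynomial σ R) (e k : ℕ) :
    (directionalDeriv v)^[k] (G * L ^ e) = (directionalDeriv v)^[k] G * L ^ e := by
  refine Function.Commute.iterate_left (g := (· * L ^ e)) (fun G => ?_) k G
  simp [Derivation.leibniz, Derivation.leibniz_pow, hL, mul_comm]

lemma directionalDeriv_mul_pow_succ {c : R} (hL : directionalDeriv v L = C c)
    (G : MvPolynomial σ R) (e : ℕ) :
    directionalDeriv v (G * L ^ (e + 1)) =
      (directionalDeriv v G * L + C (((e : R) + 1) * c) * G) * L ^ e := by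
  rw [Derivation.leibniz, Derivation.leibniz_pow, hL, add_tsub_cancel_right]
  simp only [smul_eq_mul, nsmul_eq_mul, map_mul, map_add, map_natCast, map_one]
  push_cast
  ring

lemma IsHomogeneous.directionalDeriv_mul_add_C_mul {G : MvPolynomial σ R} {d : ℕ}
    (hG : G.IsHomogeneous d) (hL : L.IsHomogeneous 1) (z : R) :
    (directionalDeriv v G * L + C z * G).IsHomogeneous d := by
  refine IsHomogeneous.add ?_ (hG.C_mul z)
  rcases d with _ | d
  · rw [hG.directionalDeriv_eq_zero, zero_mul]
    exact isHomogeneous_zero _ _ _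
  · simpa using hG.directionalDeriv.mul hL

section Field

variable {K : Type*} [Field K] [CharZero K] {v : σ → K} {L G : MvPolynomial σ K} {c : K}

lemma IsHomogeneous.eq_zero_of_directionalDeriv_mul_add_C_mul_eq_zero
    (hL : directionalDeriv v L = C c) (hc : c ≠ 0) {d e : ℕ} (hG : G.IsHomogeneous d)
    (he : e ≠ 0) (h : directionalDeriv v G * L + C (e * c) * G = 0) : G = 0 := by
  have hL0 : L ≠ 0 := by
    rintro rfl
    exact hc (C_injective σ K (by simpa using hL.symm))
  have hdvd : ∀ {G : MvPolynomial σ K} {e : ℕ}, e ≠ 0 →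
      directionalDeriv v G * L + C (e * c) * G = 0 →
        G = -(L * (C (e * c)⁻¹ * directionalDeriv v G)) := by
    intro G e he h
    have hinv : C (e * c)⁻¹ * C (e * c) = (1 : MvPolynomial σ K) := by
      rw [← map_mul, inv_mul_cancel₀ (mul_ne_zero (Nat.cast_ne_zero.mpr he) hc), map_one]
    linear_combination C (e * c)⁻¹ * h - G * hinv
  induction d generalizing G e with
  | zero => rw [hdvd he h, hG.directionalDeriv_eq_zero, mul_zero, mul_zero, neg_zero]
  | succ d ih =>
    set G₁ := C (e * c)⁻¹ * directionalDeriv v G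
    have hGL : G = -(L * G₁) := hdvd he h
    have h₁ : directionalDeriv v G₁ * L + C (((e + 1 : ℕ) : K) * c) * G₁ = 0 := by
      rw [hGL, Derivation.map_neg, Derivation.leibniz, hL] at h
      refine (mul_eq_zero.mp ?_).resolve_left hL0
      push_cast
      simp only [smul_eq_mul, map_mul, map_add, map_natCast, map_one] at h ⊢
      linear_combination -h
    have hG₁ : G₁ = 0 := ih (hG.directionalDeriv.C_mul _) (Nat.succ_ne_zero e) h₁
    rw [hGL, hG₁, mul_zero, neg_zero]

lemma IsHomogeneous.exists_iterate_directionalDeriv_mul_pow {d e k : ℕ}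
    (hG : G.IsHomogeneous d) (hL1 : L.IsHomogeneous 1) (hL : directionalDeriv v L = C c)
    (hc : c ≠ 0) (hk : k ≤ e) :
    ∃ H : MvPolynomial σ K, H.IsHomogeneous d ∧
      (directionalDeriv v)^[k] (G * L ^ e) = H * L ^ (e - k) ∧ (H = 0 → G = 0) := by
  induction k generalizing G e with
  | zero => exact ⟨G, hG, rfl, id⟩
  | succ k ih =>
    obtain ⟨e, rfl⟩ := Nat.exists_eq_add_of_lt hk
    obtain ⟨H, hH, hHeq, hH0⟩ :=
      ih (hG.directionalDeriv_mul_add_C_mul hL1 (((k + e : ℕ) + 1) * c)) (Nat.le_add_right k e)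
    refine ⟨H, hH, ?_, fun h0 => hG.eq_zero_of_directionalDeriv_mul_add_C_mul_eq_zero hL hc
      (Nat.succ_ne_zero (k + e)) ?_⟩
    · rw [Function.iterate_succ_apply, directionalDeriv_mul_pow_succ hL, hHeq]
      congr 2
      omega
    · simpa using hH0 h0

end Field

section BinaryForms

variable {K : Type*} [Field K]

noncomputable def kernelDirection (L : MvPolynomial (Fin 2) K) : Fin 2 → K :=
  ![coeff (Finsupp.single 1 1) L, -coeff (Finsupp.single 0 1) L]

lemma directionalDeriv_kernelDirection {L L' : MvPolynomial (Fin 2) K}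
    (hL' : L'.IsHomogeneous 1) :
    directionalDeriv (kernelDirection L) L' =
      C (coeff (Finsupp.single 1 1) L * coeff (Finsupp.single 0 1) L' -
        coeff (Finsupp.single 0 1) L * coeff (Finsupp.single 1 1) L') := by
  rw [hL'.directionalDeriv_eq_C, Fin.sum_univ_two, kernelDirection]
  simp [sub_eq_add_neg]

lemma directionalDeriv_kernelDirection_self {L : MvPolynomial (Fin 2) K}
    (hL : L.IsHomogeneous 1) : directionalDeriv (kernelDirection L) L = 0 := by
  rw [directionalDeriv_kernelDirection hL, mul_comm, sub_self, map_zero]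

lemma exists_ne_zero_directionalDeriv_kernelDirection_eq_C {L L' : MvPolynomial (Fin 2) K}
    (hL0 : L ≠ 0) (hL : L.IsHomogeneous 1) (hL' : L'.IsHomogeneous 1)
    (hLL' : ∀ c : K, L' ≠ c • L) :
    ∃ c ≠ 0, directionalDeriv (kernelDirection L) L' = C c := by
  refine ⟨_, fun h => ?_, directionalDeriv_kernelDirection hL'⟩
  rw [sub_eq_zero] at h
  rw [hL.eq_sum_C_coeff_mul_X, Fin.sum_univ_two] at hL0 hLL'
  rw [hL'.eq_sum_C_coeff_mul_X, Fin.sum_univ_two] at hLL'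
  set a := coeff (Finsupp.single 0 1) L
  set b := coeff (Finsupp.single 1 1) L
  suffices ∃ c, coeff (Finsupp.single 0 1) L' = c * a ∧ coeff (Finsupp.single 1 1) L' = c * b by
    obtain ⟨c, h0, h1⟩ := this
    refine hLL' c ?_
    rw [h0, h1, smul_add, smul_eq_C_mul, smul_eq_C_mul]
    simp only [map_mul]
    ring
  by_cases ha : a = 0
  · have hb : b ≠ 0 := fun hb => hL0 (by simp [ha, hb])
    refine ⟨coeff (Finsupp.single 1 1) L' / b, ?_, (div_mul_cancel₀ _ hb).symm⟩
    rw [ha, mul_zero]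
    simpa [ha, hb] using h
  · refine ⟨coeff (Finsupp.single 0 1) L' / a, (div_mul_cancel₀ _ ha).symm, ?_⟩
    field_simp
    linear_combination -h

end BinaryForms

theorem eq_zero_of_sum_mul_pow_eq_zero {K : Type*} [Field K] [CharZero K] {m : ℕ}
    {L G : Fin m → MvPolynomial (Fin 2) K} {d e : Fin m → ℕ} (hL0 : ∀ i, L i ≠ 0)
    (hL1 : ∀ i, (L i).IsHomogeneous 1) (hL : ∀ i j, i ≠ j → ∀ c : K, L j ≠ c • L i)
    (hG : ∀ i, (G i).IsHomogeneous (d i)) (he : ∀ i, ∑ j, (d j + 1) ≤ e i + (d i + 1))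
    (h : ∑ i, G i * L i ^ e i = 0) : ∀ i, G i = 0 := by
  induction m with
  | zero => exact fun i => i.elim0
  | succ m ih =>
    have hk : ∀ i : Fin m, d 0 + 1 ≤ e i.succ ∧
        ∑ j : Fin m, (d j.succ + 1) ≤ e i.succ - (d 0 + 1) + (d i.succ + 1) := by
      intro i
      have hei := he i.succ
      rw [Fin.sum_univ_succ] at hei
      have := Finset.single_le_sum (f := fun j : Fin m => d j.succ + 1)
        (fun j _ => Nat.zero_le _) (Finset.mem_univ i)
      omega
    have hc : ∀ i : Fin m,
        ∃ c ≠ 0, directionalDeriv (kernelDirection (L 0)) (L i.succ) = C c := fun i =>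
      exists_ne_zero_directionalDeriv_kernelDirection_eq_C (hL0 0) (hL1 0) (hL1 i.succ)
        (hL 0 i.succ (Fin.succ_ne_zero i).symm)
    choose c hc0 hDc using hc
    choose H hH hHeq hH0 using fun i => (hG i.succ).exists_iterate_directionalDeriv_mul_pow
      (c := c i) (hL1 i.succ) (hDc i) (hc0 i) (hk i).1
    have hHsum : ∑ i, H i * L i.succ ^ (e i.succ - (d 0 + 1)) = 0 := by
      have hDk := congrArg
        ((directionalDeriv (kernelDirection (L 0))).toLinearMap ^ (d 0 + 1)) h
      rw [Fin.sum_univ_succ, map_add, map_sum, map_zero] at hDk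
      simpa only [Module.End.pow_apply, Derivation.coeFn_coe, hHeq, zero_mul, zero_add,
        iterate_directionalDeriv_mul_pow_of_eq_zero
          (directionalDeriv_kernelDirection_self (hL1 0)),
        (hG 0).iterate_directionalDeriv_eq_zero (Nat.lt_succ_self _)] using hDk
    have hGsucc : ∀ i : Fin m, G i.succ = 0 := fun i => hH0 i <| ih (fun i => hL0 i.succ)
      (fun i => hL1 i.succ) (fun i j hij => hL _ _ (Fin.succ_injective _ |>.ne hij)) hH
      (fun i => (hk i).2) hHsum i
    have hG0 : G 0 = 0 := by
      simpa [Fin.sum_univ_succ, hGsucc, hL0 0] using h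
    exact Fin.cases hG0 hGsucc

end MvPolynomial

theorem jordan_lemma (n m : ℕ) (L G : Fin m → MvPolynomial (Fin 2) ℂ)
    (g : Fin m → ℕ)
    (hL : ∀ i, IsLinearForm (L i))
    (hprop : ∀ i j, i ≠ j → ¬ Proportional (L i) (L j))
    (hg : ∀ i, 1 ≤ g i)
    (hG : ∀ i, (G i).IsHomogeneous (g i - 1))
    (hsum : ∑ i, g i ≤ n + 1)
    (h0 : (0 : MvPolynomial (Fin 2) ℂ) = ∑ i, G i * (L i) ^ (n - g i + 1)) :
    ∀ i, G i = 0 := by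
  refine eq_zero_of_sum_mul_pow_eq_zero (fun i => (hL i).1) (fun i => (hL i).2)
    (fun i j hij c hc => hprop i j hij ⟨c, hc⟩) hG (fun i => ?_) h0.symm
  have hgi := Finset.single_le_sum (fun j _ => Nat.zero_le (g j)) (Finset.mem_univ i)
  simp only [fun j => Nat.sub_add_cancel (hg j)]
  omega
end

section
/- Let φ = ∏_{i=1}^m (b_i ∂_0 - a_i ∂_1)^{g_i} be a product of powers of pairwise non-proportional differential operators of degree ∑ g_i = s, and set L_i = a_i x_0 + b_i x_1. Then a binary form f of degree n ≥ s satisfies φ ∘ f = 0 if and only if f admits a representation f = G_1·L_1^{n-g_1+1} + ... + G_m·L_m^{n-g_m+1} with each G_i a binary form of degree g_i - 1. -/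
open MvPolynomial

/-!
Write `∂ᵢ = bᵢ∂₀ - aᵢ∂₁`; it is the derivation by which `bᵢx₀ - aᵢx₁` acts, and it kills
`Lᵢ = aᵢx₀ + bᵢx₁`. By Euler's identity the kernel of `∂ᵢ` on forms of degree `k` is the line
through `Lᵢᵏ`, so by rank–nullity `∂ᵢ` maps forms of degree `k + 1` onto forms of degree `k`.
Hence `φ = ∏ ∂ᵢ^gᵢ` maps forms of degree `n` onto forms of degree `n - s`, and its kernel there
has dimension `s`.

Each `Gᵢ Lᵢ^(n-gᵢ+1)` lies in that kernel, since `∂ᵢ` passes through `Lᵢ` and `∂ᵢ^gᵢ` kills `Gᵢ`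
for degree reasons. The map `(Gᵢ) ↦ ∑ Gᵢ Lᵢ^(n-gᵢ+1)` has a source of dimension `∑ gᵢ = s`, and
it is injective: `∏_{j ≠ i} ∂ⱼ^gⱼ` kills every term but the `i`-th, and for `j ≠ i` the
derivation `∂ⱼ` sends a nonzero form divisible by `Lᵢ^(t+1)` to a nonzero form divisible by
`Lᵢ^t`. So its image is the whole kernel.
-/

theorem MvPolynomial.pderiv_comm {σ R : Type*} [CommSemiring R] (i j : σ)
    (f : MvPolynomial σ R) : pderiv i (pderiv j f) = pderiv j (pderiv i f) := by
  classical
  induction f using MvPolynomial.induction_on' with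
  | add p q hp hq => simp only [map_add, hp, hq]
  | monomial s c =>
    by_cases hij : i = j
    · rw [hij]
    simp only [pderiv_monomial, tsub_right_comm, Finsupp.tsub_apply, Finsupp.single_apply,
      if_neg hij, if_neg (Ne.symm hij), tsub_zero, mul_right_comm]

instance MvPolynomial.finite_homogeneousSubmodule {σ R : Type*} [Finite σ] [CommRing R]
    (n : ℕ) : Module.Finite R (homogeneousSubmodule σ R n) :=
  Module.Finite.iff_fg.mpr (homogeneousSubmodule_fg σ R n)

theorem MvPolynomial.finrank_homogeneousSubmodule {σ K : Type*} [Fintype σ] [Field K] (n : ℕ) :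
    Module.finrank K (homogeneousSubmodule σ K n) = (Fintype.card σ + n - 1).choose n := by
  classical
  have hset : {d : σ →₀ ℕ | d.degree = n} =
      ((Finset.univ : Finset σ).finsuppAntidiag n : Set (σ →₀ ℕ)) := by
    ext d; simp [Finsupp.degree_eq_sum]
  rw [homogeneousSubmodule_eq_finsupp_supported, hset,
    LinearEquiv.finrank_eq (AddMonoidAlgebra.supportedEquivFinsupp _)]
  simp [Finset.card_finsuppAntidiag_nat_eq_choose]

theorem MvPolynomial.IsHomogeneous.eq_C_coeff_zero {σ R : Type*} [CommSemiring R]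
    {p : MvPolynomial σ R} (hp : p.IsHomogeneous 0) : p = C (coeff 0 p) :=
  totalDegree_eq_zero_iff_eq_C.mp ((totalDegree_zero_iff_isHomogeneous _).2 hp)

namespace BinaryForm

local notation "S₂" => MvPolynomial (Fin 2) ℂ
local notation "𝓗" => homogeneousSubmodule (Fin 2) ℂ

lemma finrank_homogeneousSubmodule_two (k : ℕ) : Module.finrank ℂ (𝓗 k) = k + 1 := by
  rw [MvPolynomial.finrank_homogeneousSubmodule, Fintype.card_fin,
    show 2 + k - 1 = k + 1 by omega, Nat.choose_succ_self_right]

noncomputable def monomialDeriv : Multiplicative (Fin 2 →₀ ℕ) →* Module.End ℂ S₂ where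
  toFun m := (pderiv 0).toLinearMap ^ m.toAdd 0 * (pderiv 1).toLinearMap ^ m.toAdd 1
  map_one' := by simp
  map_mul' m m' := by
    have h : Commute (pderiv 1).toLinearMap ((pderiv 0).toLinearMap : Module.End ℂ S₂) :=
      LinearMap.ext fun f => pderiv_comm 1 0 f
    simp only [toAdd_mul, Finsupp.add_apply, pow_add, mul_assoc, (h.pow_pow _ _).left_comm]

/-- The apolarity action as an algebra map: `x₀ ↦ ∂₀`, `x₁ ↦ ∂₁`. -/
noncomputable def contractHom : S₂ →ₐ[ℂ] Module.End ℂ S₂ :=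
  AddMonoidAlgebra.lift ℂ (Module.End ℂ S₂) (Fin 2 →₀ ℕ) monomialDeriv

theorem contractOp_eq_contractHom (φ f : S₂) : contractOp φ f = contractHom φ f := by
  simp only [contractOp, contractHom, AddMonoidAlgebra.lift_apply, monomialDeriv, Finsupp.sum,
    LinearMap.sum_apply, LinearMap.smul_apply, MonoidHom.coe_mk, OneHom.coe_mk,
    toAdd_ofAdd, Module.End.mul_apply, Module.End.coe_pow]
  rfl

lemma contractHom_X (i : Fin 2) : contractHom (X i) = (pderiv i).toLinearMap := by
  rw [X, ← single_eq_monomial, contractHom, AddMonoidAlgebra.lift_single, one_smul]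
  fin_cases i <;> simp [monomialDeriv]

noncomputable def linForm (a b : ℂ) : S₂ := C a * X 0 + C b * X 1

noncomputable def perpForm (a b : ℂ) : S₂ := C b * X 0 - C a * X 1

noncomputable def dirDeriv (a b : ℂ) : Derivation ℂ S₂ S₂ := b • pderiv 0 - a • pderiv 1

lemma contractHom_perpForm (a b : ℂ) : contractHom (perpForm a b) = dirDeriv a b := by
  refine LinearMap.ext fun f => ?_
  simp [perpForm, dirDeriv, ← algebraMap_eq, Algebra.algebraMap_eq_smul_one, contractHom_X]

lemma dirDeriv_apply (a b : ℂ) (f : S₂) :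
    dirDeriv a b f = C b * pderiv 0 f - C a * pderiv 1 f := by
  simp [dirDeriv, smul_eq_C_mul]

lemma dirDeriv_linForm (a b a' b' : ℂ) :
    dirDeriv a b (linForm a' b') = C (a' * b - b' * a) := by
  simp [dirDeriv_apply, linForm, pderiv_X]
  ring

lemma dirDeriv_linForm_self (a b : ℂ) : dirDeriv a b (linForm a b) = 0 := by
  rw [dirDeriv_linForm, mul_comm, sub_self, map_zero]

lemma eval_linForm (a b a' b' : ℂ) : eval ![b, -a] (linForm a' b') = a' * b - b' * a := by
  simp [linForm]
  ring

lemma linForm_ne_zero {a b : ℂ} (hab : ¬(a = 0 ∧ b = 0)) : linForm a b ≠ 0 := by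
  intro h
  have h0 := congrArg (eval ![1, 0]) h
  have h1 := congrArg (eval ![0, 1]) h
  simp [linForm] at h0 h1
  exact hab ⟨h0, h1⟩

lemma sub_ne_zero_of_not_proportional {a b a' b' : ℂ} (hab : ¬(a = 0 ∧ b = 0))
    (hprop : ¬ ∃ c : ℂ, a' = c * a ∧ b' = c * b) : a' * b - b' * a ≠ 0 := by
  intro h
  apply hprop
  by_cases ha : a = 0
  · have hb : b ≠ 0 := fun hb => hab ⟨ha, hb⟩
    refine ⟨b' / b, ?_, by field_simp⟩
    simpa [ha, hb] using h
  · exact ⟨a' / a, by field_simp, by field_simp; linear_combination -h⟩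

lemma isHomogeneous_linForm (a b : ℂ) : (linForm a b).IsHomogeneous 1 :=
  (isHomogeneous_C_mul_X _ _).add (isHomogeneous_C_mul_X _ _)

lemma _root_.MvPolynomial.IsHomogeneous.dirDeriv {f : S₂} {k : ℕ} (a b : ℂ)
    (hf : f.IsHomogeneous k) : (dirDeriv a b f).IsHomogeneous (k - 1) :=
  (𝓗 (k - 1)).sub_mem ((𝓗 _).smul_mem b hf.pderiv) ((𝓗 _).smul_mem a hf.pderiv)

lemma exists_det_eq_one {a b : ℂ} (hab : ¬(a = 0 ∧ b = 0)) : ∃ c d : ℂ, b * c - a * d = 1 := by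
  by_cases ha : a = 0
  · exact ⟨b⁻¹, 0, by simp [ha, mul_inv_cancel₀ (fun hb => hab ⟨ha, hb⟩)]⟩
  · exact ⟨0, -a⁻¹, by simp [ha]⟩

/-- Euler's identity, written in the basis `dirDeriv a b`, `dirDeriv (-c) (-d)` of derivations,
which is dual (up to the determinant) to the basis `linForm c d`, `linForm a b` of linear forms. -/
lemma linForm_mul_dirDeriv_add {f : S₂} {k : ℕ} (hf : f.IsHomogeneous k) (a b c d : ℂ) :
    linForm a b * dirDeriv (-c) (-d) f + linForm c d * dirDeriv a b f =
      C ((b * c - a * d) * k) * f := by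
  have euler := hf.sum_X_mul_pderiv
  rw [Fin.sum_univ_two, nsmul_eq_mul] at euler
  simp only [linForm, dirDeriv_apply, map_mul, map_natCast, map_neg, map_sub]
  linear_combination (C b * C c - C a * C d) * euler

lemma exists_eq_C_mul_linForm_pow {a b : ℂ} (hab : ¬(a = 0 ∧ b = 0)) {k : ℕ} {f : S₂}
    (hf : f.IsHomogeneous k) (hD : dirDeriv a b f = 0) :
    ∃ c : ℂ, f = C c * linForm a b ^ k := by
  obtain ⟨c, d, hdet⟩ := exists_det_eq_one hab
  induction k generalizing f with
  | zero =>
    exact ⟨_, by simpa using hf.eq_C_coeff_zero⟩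
  | succ k ih =>
    set f₁ := C ((k + 1 : ℂ)⁻¹) * dirDeriv (-c) (-d) f
    have hf₁ : f₁.IsHomogeneous k := by simpa using (isHomogeneous_C _ _).mul (hf.dirDeriv _ _)
    have hf_eq : f = linForm a b * f₁ := by
      have euler := linForm_mul_dirDeriv_add hf a b c d
      rw [hD, mul_zero, add_zero, hdet, one_mul] at euler
      rw [mul_left_comm, euler, ← mul_assoc, ← map_mul]
      simp [show (k + 1 : ℂ) ≠ 0 from Nat.cast_add_one_ne_zero k]
    have hD₁ : dirDeriv a b f₁ = 0 := by
      rw [hf_eq, Derivation.leibniz, dirDeriv_linForm_self, smul_zero, add_zero,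
        smul_eq_mul, mul_eq_zero] at hD
      exact hD.resolve_left (linForm_ne_zero hab)
    obtain ⟨e, he⟩ := ih hf₁ hD₁
    exact ⟨e, by rw [hf_eq, he]; ring⟩

/-- The kernel of `dirDeriv a b` on forms of degree `k + 1` is the line through
`linForm a b ^ (k + 1)`, so by rank–nullity the image is everything. -/
lemma surjOn_dirDeriv {a b : ℂ} (hab : ¬(a = 0 ∧ b = 0)) (k : ℕ) :
    Set.SurjOn (dirDeriv a b) (𝓗 (k + 1)) (𝓗 k) := by
  set D := (dirDeriv a b : S₂ →ₗ[ℂ] S₂).domRestrict (𝓗 (k + 1))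
  have hrange : LinearMap.range D ≤ 𝓗 k := by
    rintro _ ⟨f, rfl⟩
    exact f.2.dirDeriv a b
  have hker : Module.finrank ℂ (LinearMap.ker D) ≤ 1 := by
    rw [← Submodule.finrank_map_subtype_eq]
    refine (Submodule.finrank_mono ?_).trans
      (finrank_span_singleton (pow_ne_zero (k + 1) (linForm_ne_zero hab))).le
    rintro _ ⟨f, hf, rfl⟩
    obtain ⟨c, hc⟩ := exists_eq_C_mul_linForm_pow hab f.2 hf
    exact Submodule.mem_span_singleton.mpr ⟨c, by rw [Submodule.subtype_apply, hc, smul_eq_C_mul]⟩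
  have hrank := D.finrank_range_add_finrank_ker
  rw [finrank_homogeneousSubmodule_two] at hrank
  have heq : LinearMap.range D = 𝓗 k := Submodule.eq_of_le_of_finrank_le hrange (by
    rw [finrank_homogeneousSubmodule_two]; omega)
  intro h hh
  obtain ⟨f, hf⟩ := (heq ▸ hh : h ∈ LinearMap.range D)
  exact ⟨f, f.2, hf⟩

lemma dirDeriv_mul_linForm_pow_self (a b : ℂ) (G : S₂) (t : ℕ) :
    dirDeriv a b (G * linForm a b ^ t) = dirDeriv a b G * linForm a b ^ t := by
  rw [Derivation.leibniz, Derivation.leibniz_pow, dirDeriv_linForm_self]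
  simp [mul_comm]

lemma linForm_pow_dvd_dirDeriv_mul_linForm_pow_succ (a b a' b' : ℂ) (G : S₂) (t : ℕ) :
    linForm a b ^ t ∣ dirDeriv a' b' (G * linForm a b ^ (t + 1)) := by
  refine ⟨linForm a b * dirDeriv a' b' G + ((t + 1 : ℕ) : S₂) * G * dirDeriv a' b' (linForm a b),
    ?_⟩
  rw [Derivation.leibniz, Derivation.leibniz_pow, Nat.add_sub_cancel]
  simp only [smul_eq_mul, nsmul_eq_mul]
  ring

local notation "∂[" a ", " b "]" => (dirDeriv a b : Module.End ℂ S₂)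

lemma dirDeriv_pow_eq_zero (a b : ℂ) {G : S₂} {d g : ℕ} (hG : G.IsHomogeneous d) (hdg : d < g) :
    (∂[a, b] ^ g) G = 0 := by
  obtain ⟨g, rfl⟩ : ∃ g', g = g' + 1 := ⟨g - 1, by omega⟩
  rw [pow_succ, Module.End.mul_apply]
  induction d generalizing G g with
  | zero =>
    rw [hG.eq_C_coeff_zero]
    simp
  | succ d ih =>
    obtain ⟨g, rfl⟩ : ∃ g', g = g' + 1 := ⟨g - 1, by omega⟩
    rw [pow_succ, Module.End.mul_apply]
    exact ih (hG.dirDeriv a b) _ (by omega)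

lemma dirDeriv_pow_mul_linForm_pow_eq_zero (a b : ℂ) {G : S₂} {d g : ℕ}
    (hG : G.IsHomogeneous d) (hdg : d < g) (t : ℕ) : (∂[a, b] ^ g) (G * linForm a b ^ t) = 0 := by
  have hpass : ∀ g, (∂[a, b] ^ g) (G * linForm a b ^ t) = (∂[a, b] ^ g) G * linForm a b ^ t := by
    intro g
    induction g with
    | zero => rfl
    | succ g ih =>
      rw [pow_succ', Module.End.mul_apply, ih, Module.End.mul_apply]
      exact dirDeriv_mul_linForm_pow_self a b _ t
  rw [hpass, dirDeriv_pow_eq_zero a b hG hdg, zero_mul]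

def LowersDegreeOnto (φ : S₂) (r : ℕ) : Prop :=
  ∀ k, Set.MapsTo (contractHom φ) (𝓗 (k + r)) (𝓗 k) ∧
    Set.SurjOn (contractHom φ) (𝓗 (k + r)) (𝓗 k)

lemma lowersDegreeOnto_perpForm {a b : ℂ} (hab : ¬(a = 0 ∧ b = 0)) :
    LowersDegreeOnto (perpForm a b) 1 := by
  intro k
  rw [contractHom_perpForm]
  exact ⟨fun f hf => hf.dirDeriv a b, surjOn_dirDeriv hab k⟩

lemma lowersDegreeOnto_one : LowersDegreeOnto 1 0 := fun k => by
  simpa using ⟨Set.mapsTo_id _, Set.surjOn_id _⟩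

lemma LowersDegreeOnto.mul {φ ψ : S₂} {r r' : ℕ} (hφ : LowersDegreeOnto φ r)
    (hψ : LowersDegreeOnto ψ r') : LowersDegreeOnto (φ * ψ) (r + r') := by
  intro k
  rw [map_mul, Module.End.coe_mul, ← add_assoc]
  exact ⟨(hφ k).1.comp (hψ (k + r)).1, (hφ k).2.comp (hψ (k + r)).2⟩

lemma LowersDegreeOnto.pow {φ : S₂} {r : ℕ} (hφ : LowersDegreeOnto φ r) (g : ℕ) :
    LowersDegreeOnto (φ ^ g) (r * g) := by
  induction g with
  | zero => simpa using lowersDegreeOnto_one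
  | succ g ih => simpa [pow_succ, mul_add] using ih.mul hφ

lemma lowersDegreeOnto_prod {ι : Type*} (u : Finset ι) (φ : ι → S₂) (r : ι → ℕ)
    (h : ∀ i ∈ u, LowersDegreeOnto (φ i) (r i)) :
    LowersDegreeOnto (∏ i ∈ u, φ i) (∑ i ∈ u, r i) := by
  classical
  induction u using Finset.induction_on with
  | empty => simpa using lowersDegreeOnto_one
  | insert j u hj ih =>
    rw [Finset.prod_insert hj, Finset.sum_insert hj]
    exact (h j (u.mem_insert_self j)).mul (ih fun i hi => h i (Finset.mem_insert_of_mem hi))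

lemma LowersDegreeOnto.finrank_inf_ker {φ : S₂} {r : ℕ} (hφ : LowersDegreeOnto φ r) (k : ℕ) :
    Module.finrank ℂ ↥(𝓗 (k + r) ⊓ LinearMap.ker (contractHom φ)) = r := by
  set D := (contractHom φ).domRestrict (𝓗 (k + r))
  have hrange : LinearMap.range D = 𝓗 k := by
    rw [LinearMap.range_domRestrict]
    exact SetLike.coe_injective (by
      rw [Submodule.map_coe]; exact (hφ k).2.image_eq_of_mapsTo (hφ k).1)
  have hker : (LinearMap.ker D).map (𝓗 (k + r)).subtype =
      𝓗 (k + r) ⊓ LinearMap.ker (contractHom φ) := by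
    rw [LinearMap.ker_domRestrict, Submodule.map_comap_subtype]
  have hrank := D.finrank_range_add_finrank_ker
  rw [hrange, finrank_homogeneousSubmodule_two, finrank_homogeneousSubmodule_two,
    ← Submodule.finrank_map_subtype_eq, hker] at hrank
  omega

/-- The forms killed by `dirDeriv a' b'` are multiples of powers of `linForm a' b'`, which do not
vanish at the zero `(b, -a)` of `linForm a b`. -/
lemma eq_zero_of_dirDeriv_eq_zero {a b a' b' : ℂ} (hdet : a' * b - b' * a ≠ 0) {k t : ℕ}
    {x : S₂} (hx : x.IsHomogeneous k) (hdvd : linForm a b ^ (t + 1) ∣ x)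
    (hD : dirDeriv a' b' x = 0) : x = 0 := by
  have hab' : ¬(a' = 0 ∧ b' = 0) := fun h => hdet (by simp [h.1, h.2])
  obtain ⟨c, rfl⟩ := exists_eq_C_mul_linForm_pow hab' hx hD
  obtain ⟨y, hy⟩ := hdvd
  have hev := congrArg (eval ![b, -a]) hy
  simp only [map_mul, map_pow, eval_C, eval_linForm, sub_self, mul_comm b a,
    zero_pow t.succ_ne_zero, zero_mul] at hev
  simp [(mul_eq_zero.mp hev).resolve_right (pow_ne_zero _ hdet)]

def AnnihilatesNoPowMultiple (φ : S₂) (a b : ℂ) (r : ℕ) : Prop :=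
  ∀ ⦃k t : ℕ⦄ ⦃x : S₂⦄, r ≤ t → linForm a b ^ t ∣ x → x.IsHomogeneous k →
    contractHom φ x = 0 → x = 0

lemma annihilatesNoPowMultiple_one (a b : ℂ) : AnnihilatesNoPowMultiple 1 a b 0 :=
  fun _ _ _ _ _ _ h => by simpa using h

lemma AnnihilatesNoPowMultiple.mul_perpForm {φ : S₂} {a b a' b' : ℂ} {r : ℕ}
    (hφ : AnnihilatesNoPowMultiple φ a b r) (hdet : a' * b - b' * a ≠ 0) :
    AnnihilatesNoPowMultiple (φ * perpForm a' b') a b (r + 1) := by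
  intro k t x hrt hdvd hx h0
  obtain ⟨t, rfl⟩ : ∃ t', t = t' + 1 := ⟨t - 1, by omega⟩
  rw [map_mul, Module.End.mul_apply, contractHom_perpForm] at h0
  refine eq_zero_of_dirDeriv_eq_zero hdet hx hdvd (hφ (t := t) (by omega) ?_ (hx.dirDeriv a' b') h0)
  obtain ⟨G, rfl⟩ := hdvd
  simpa [mul_comm] using linForm_pow_dvd_dirDeriv_mul_linForm_pow_succ a b a' b' G t

lemma AnnihilatesNoPowMultiple.mul_perpForm_pow {φ : S₂} {a b a' b' : ℂ} {r : ℕ}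
    (hφ : AnnihilatesNoPowMultiple φ a b r) (hdet : a' * b - b' * a ≠ 0) (g : ℕ) :
    AnnihilatesNoPowMultiple (φ * perpForm a' b' ^ g) a b (r + g) := by
  induction g with
  | zero => simpa using hφ
  | succ g ih => simpa [pow_succ, ← mul_assoc, ← add_assoc] using ih.mul_perpForm hdet

lemma annihilatesNoPowMultiple_prod {ι : Type*} (u : Finset ι) (a' b' : ι → ℂ) (g : ι → ℕ)
    {a b : ℂ} (hdet : ∀ j ∈ u, a' j * b - b' j * a ≠ 0) :
    AnnihilatesNoPowMultiple (∏ j ∈ u, perpForm (a' j) (b' j) ^ g j) a b (∑ j ∈ u, g j) := by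
  classical
  induction u using Finset.induction_on with
  | empty => simpa using annihilatesNoPowMultiple_one a b
  | insert j u hj ih =>
    rw [Finset.prod_insert hj, Finset.sum_insert hj, mul_comm, add_comm]
    exact (ih fun i hi => hdet i (Finset.mem_insert_of_mem hi)).mul_perpForm_pow
      (hdet j (u.mem_insert_self j)) (g j)

lemma isHomogeneous_mul_linForm_pow {G : S₂} {g n : ℕ} (hG : G.IsHomogeneous (g - 1))
    (hg : 1 ≤ g) (hgn : g ≤ n) (a b : ℂ) : (G * linForm a b ^ (n - g + 1)).IsHomogeneous n := by
  have h := hG.mul ((isHomogeneous_linForm a b).pow (n - g + 1))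
  rwa [one_mul, show g - 1 + (n - g + 1) = n by omega] at h

lemma contractHom_prod_mul_linForm_pow_eq_zero {ι : Type*} (u : Finset ι) (a b : ι → ℂ)
    (g : ι → ℕ) {i : ι} (hi : i ∈ u) {G : S₂} {d : ℕ} (hG : G.IsHomogeneous d) (hd : d < g i)
    (t : ℕ) :
    contractHom (∏ j ∈ u, perpForm (a j) (b j) ^ g j) (G * linForm (a i) (b i) ^ t) = 0 := by
  classical
  rw [← Finset.mul_prod_erase u _ hi, mul_comm, map_mul contractHom, Module.End.mul_apply, map_pow,
    contractHom_perpForm, dirDeriv_pow_mul_linForm_pow_eq_zero _ _ hG hd, map_zero]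

section Decomposition

variable {ι : Type*} [Fintype ι] (a b : ι → ℂ) (g : ι → ℕ)

noncomputable def gadMap (n : ℕ) : (∀ i, 𝓗 (g i - 1)) →ₗ[ℂ] S₂ :=
  ∑ i, LinearMap.mulRight ℂ (linForm (a i) (b i) ^ (n - g i + 1)) ∘ₗ (𝓗 (g i - 1)).subtype ∘ₗ
    LinearMap.proj i

lemma gadMap_apply (n : ℕ) (G : ∀ i, 𝓗 (g i - 1)) :
    gadMap a b g n G = ∑ i, (G i : S₂) * linForm (a i) (b i) ^ (n - g i + 1) := by
  simp [gadMap]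

variable {a b g}

lemma gadMap_injective [DecidableEq ι] (hab : ∀ i, ¬(a i = 0 ∧ b i = 0))
    (hprop : ∀ i j, i ≠ j → ¬ ∃ c : ℂ, a j = c * a i ∧ b j = c * b i)
    (hg : ∀ i, 1 ≤ g i) {n : ℕ} (hn : ∑ i, g i ≤ n) : Function.Injective (gadMap a b g n) := by
  rw [← LinearMap.ker_eq_bot, LinearMap.ker_eq_bot']
  intro G hG
  funext i
  have hsum := Finset.add_sum_erase Finset.univ g (Finset.mem_univ i)
  have hdet : ∀ j ∈ Finset.univ.erase i, a j * b i - b j * a i ≠ 0 := fun j hj =>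
    sub_ne_zero_of_not_proportional (hab i) (hprop i j (Finset.ne_of_mem_erase hj).symm)
  have hkill := congrArg (contractHom (∏ j ∈ Finset.univ.erase i, perpForm (a j) (b j) ^ g j)) hG
  rw [gadMap_apply, map_sum, Finset.sum_eq_single i (fun j _ hji =>
      contractHom_prod_mul_linForm_pow_eq_zero _ a b g
        (Finset.mem_erase.mpr ⟨hji, Finset.mem_univ j⟩)
        (G j).2 (by have := hg j; omega) _) (by simp), map_zero] at hkill
  have hterm := annihilatesNoPowMultiple_prod _ a b g hdet (by omega) (dvd_mul_left _ _)
    (isHomogeneous_mul_linForm_pow (G i).2 (hg i) (by omega) (a i) (b i)) hkill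
  exact Subtype.ext ((mul_eq_zero.mp hterm).resolve_right (pow_ne_zero _ (linForm_ne_zero (hab i))))

lemma range_gadMap [DecidableEq ι] (hab : ∀ i, ¬(a i = 0 ∧ b i = 0))
    (hprop : ∀ i j, i ≠ j → ¬ ∃ c : ℂ, a j = c * a i ∧ b j = c * b i)
    (hg : ∀ i, 1 ≤ g i) {n : ℕ} (hn : ∑ i, g i ≤ n) :
    LinearMap.range (gadMap a b g n) =
      𝓗 n ⊓ LinearMap.ker (contractHom (∏ i, perpForm (a i) (b i) ^ g i)) := by
  have hgn : ∀ i, g i ≤ n := fun i =>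
    (Finset.single_le_sum (fun j _ => Nat.zero_le (g j)) (Finset.mem_univ i)).trans hn
  have hle : LinearMap.range (gadMap a b g n) ≤
      𝓗 n ⊓ LinearMap.ker (contractHom (∏ i, perpForm (a i) (b i) ^ g i)) := by
    rintro _ ⟨G, rfl⟩
    rw [gadMap_apply]
    refine Submodule.sum_mem _ fun i _ =>
      ⟨isHomogeneous_mul_linForm_pow (G i).2 (hg i) (hgn i) _ _, ?_⟩
    exact contractHom_prod_mul_linForm_pow_eq_zero _ a b g (Finset.mem_univ i) (G i).2
      (by have := hg i; omega) _
  refine Submodule.eq_of_le_of_finrank_le hle ?_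
  have hker := (lowersDegreeOnto_prod Finset.univ (fun i => perpForm (a i) (b i) ^ g i) g
    fun i _ => by simpa using (lowersDegreeOnto_perpForm (hab i)).pow (g i)).finrank_inf_ker
      (n - ∑ i, g i)
  rw [Nat.sub_add_cancel hn] at hker
  rw [hker, LinearMap.finrank_range_of_inj (gadMap_injective hab hprop hg hn),
    Module.finrank_pi_fintype]
  exact (Finset.sum_congr rfl fun i _ => by
    rw [finrank_homogeneousSubmodule_two, Nat.sub_add_cancel (hg i)]).le

end Decomposition

end BinaryForm

theorem gad_lemma (n m s : ℕ) (a b : Fin m → ℂ) (g : Fin m → ℕ)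
    (hab : ∀ i, ¬ (a i = 0 ∧ b i = 0))
    (hprop : ∀ i j, i ≠ j → ¬ ∃ c : ℂ, a j = c * a i ∧ b j = c * b i)
    (hg : ∀ i, 1 ≤ g i) (hs : ∑ i, g i = s) (hn : s ≤ n)
    (f : MvPolynomial (Fin 2) ℂ) (hf : f.IsHomogeneous n) :
    contractOp (∏ i, (C (b i) * X 0 - C (a i) * X 1) ^ g i) f = 0 ↔
      ∃ G : Fin m → MvPolynomial (Fin 2) ℂ,
        (∀ i, (G i).IsHomogeneous (g i - 1)) ∧
        f = ∑ i, G i * (C (a i) * X 0 + C (b i) * X 1) ^ (n - g i + 1) := by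
  have hrange := BinaryForm.range_gadMap hab hprop hg (n := n) (hs ▸ hn)
  rw [BinaryForm.contractOp_eq_contractHom]
  constructor
  · intro hker
    obtain ⟨G, hG⟩ : f ∈ LinearMap.range (BinaryForm.gadMap a b g n) := hrange ▸ ⟨hf, hker⟩
    exact ⟨fun i => G i, fun i => (G i).2, by rw [← hG, BinaryForm.gadMap_apply]; rfl⟩
  · rintro ⟨G, hG, rfl⟩
    exact (hrange.le ⟨fun i => ⟨G i, hG i⟩, BinaryForm.gadMap_apply a b g n _⟩).2
end

section
/- Let f be a nonzero binary form of degree n, I_f = Ann(f) its apolar ideal, A_f = T/I_f the associated Artinian Gorenstein algebra, and s = max_i dim (A_f)_i. Then the Hilbert function of A_f is H(A_f)(i) = min(i+1, s, n-i+1) for 0 ≤ i ≤ n and 0 otherwise. -/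
open MvPolynomial

/-!
Write `k i = dim (I_f)_i`, so that `H(i) = i + 1 - k i`. Clearly `k 0 = 0` (as `f ≠ 0`) and
`k i = i + 1` for `i > n`. Two further facts pin `H` down.

* Growth: if `(I_f)_i ≠ 0` then `x₀ (I_f)_i + x₁ (I_f)_i ⊆ (I_f)_{i+1}` is strictly larger than
  `x₀ (I_f)_i ≅ (I_f)_i`, since otherwise multiplication by `x₁ / x₀` would be an endomorphism of
  `(I_f)_i`, and an eigenvector `v` would satisfy `(x₁ - μ x₀) v = 0`. So `k` increases strictly
  from the first degree `d` with `k d ≠ 0` on, and `H` is nonincreasing from `d - 1` on.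
* Symmetry: the pairing `S_i × S_{n-i} → ℂ`, `(φ, ψ) ↦ (φ ψ)(∂) f` has left kernel `(I_f)_i` and
  right kernel `(I_f)_{n-i}` (a nonzero form `g` of degree `m` has some `ψ` of degree `m` with
  `ψ(∂) g ≠ 0`, by induction on `m` via Euler's formula), so `H(i) = H(n - i)`.

Hence `H(i) = i + 1` for `i < d`, `H = d` on `[d - 1, n + 1 - d]` and `H(i) = n + 1 - i` beyond,
that is `H(i) = min (i + 1, d, n + 1 - i)`, and `d = max H = s`.
-/

open Module
open scoped IsMulCommutative

theorem LinearMap.finrank_add_finrank_ker_flip {K V W : Type*} [Field K] [AddCommGroup V]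
    [Module K V] [AddCommGroup W] [Module K W] [FiniteDimensional K V] [FiniteDimensional K W]
    (B : V →ₗ[K] W →ₗ[K] K) :
    finrank K V + finrank K (ker B.flip) = finrank K W + finrank K (ker B) := by
  have hV : finrank K (ker B) + finrank K (range B.flip) = finrank K V := by
    rw [← dualAnnihilator_ker_eq_range_flip]
    exact Subspace.finrank_add_finrank_dualAnnihilator_eq _
  have hW := B.flip.finrank_range_add_finrank_ker
  omega

namespace MvPolynomial

theorem pderiv_comm_s9 {σ R : Type*} [CommRing R] (i j : σ) (p : MvPolynomial σ R) :
    pderiv i (pderiv j p) = pderiv j (pderiv i p) := by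
  classical
  have h : ⁅pderiv i, pderiv j⁆ = (0 : Derivation R (MvPolynomial σ R) (MvPolynomial σ R)) :=
    derivation_ext fun k => by
      rw [Derivation.commutator_apply, pderiv_X, pderiv_X, Pi.single_apply, Pi.single_apply]
      split_ifs <;> simp
  simpa [Derivation.commutator_apply, sub_eq_zero] using DFunLike.congr_fun h p

section IteratedDerivatives

variable {σ R : Type*} [CommRing R] {f : MvPolynomial σ R} {n : ℕ}

theorem IsHomogeneous.iterate_pderiv (hf : f.IsHomogeneous n) (i : σ) (k : ℕ) :
    ((pderiv i)^[k] f).IsHomogeneous (n - k) := by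
  induction k with
  | zero => simpa using hf
  | succ k ih => simpa [Function.iterate_succ_apply', Nat.sub_sub] using ih.pderiv

theorem IsHomogeneous.iterate_pderiv_eq_zero (hf : f.IsHomogeneous n) (i : σ) {k : ℕ}
    (hk : n < k) : (pderiv i)^[k] f = 0 := by
  have hc := totalDegree_eq_zero_iff_eq_C.mp <|
    Nat.le_zero.mp (by simpa using (hf.iterate_pderiv i n).totalDegree_le)
  obtain ⟨l, rfl⟩ := Nat.exists_eq_add_of_lt hk
  rw [show n + l + 1 = l + 1 + n by omega, Function.iterate_add_apply, hc,
    Function.iterate_succ_apply, pderiv_C, iterate_map_zero]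

end IteratedDerivatives

variable (σ R : Type*) [CommRing R]

noncomputable def diffOperators : Subalgebra R (Module.End R (MvPolynomial σ R)) :=
  Algebra.adjoin R (Set.range fun i => (pderiv i).toLinearMap)

instance : IsMulCommutative (diffOperators σ R) :=
  Algebra.isMulCommutative_adjoin R <| by
    rintro _ ⟨i, rfl⟩ _ ⟨j, rfl⟩
    exact LinearMap.ext fun p => pderiv_comm_s9 i j p

/-- The action of `T` on `S`, with `X i` acting as `∂ / ∂ X i`; its values commute because
partial derivatives do. -/
noncomputable def contraction : MvPolynomial σ R →ₐ[R] diffOperators σ R :=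
  aeval fun i => ⟨(pderiv i).toLinearMap, Algebra.subset_adjoin ⟨i, rfl⟩⟩

variable {σ R}

local notation:70 φ:70 " ⌟ " f:71 => Subtype.val (contraction _ _ φ) f

@[simp] theorem contraction_X_apply (i : σ) (f : MvPolynomial σ R) : X i ⌟ f = pderiv i f := by
  simp [contraction]

@[simp] theorem contraction_C_apply (c : R) (f : MvPolynomial σ R) : C c ⌟ f = c • f := by
  simp [contraction]

theorem contraction_mul_apply (φ ψ f : MvPolynomial σ R) : (φ * ψ) ⌟ f = φ ⌟ (ψ ⌟ f) := by
  simp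

theorem contraction_monomial_apply (m : Fin 2 →₀ ℕ) (c : R) (f : MvPolynomial (Fin 2) R) :
    monomial m c ⌟ f = c • (pderiv 0)^[m 0] ((pderiv 1)^[m 1] f) := by
  simp [contraction, aeval_monomial, Finsupp.prod_fintype, Fin.prod_univ_two, Module.End.pow_apply]

theorem contraction_apply_eq_sum (φ f : MvPolynomial (Fin 2) R) :
    φ ⌟ f = ∑ m ∈ φ.support, φ.coeff m • (pderiv 0)^[m 0] ((pderiv 1)^[m 1] f) := by
  conv_lhs => rw [φ.as_sum]
  rw [map_sum]
  simp only [AddSubmonoidClass.coe_finsetSum, LinearMap.coe_sum, Finset.sum_apply]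
  exact Finset.sum_congr rfl fun m _ => contraction_monomial_apply _ _ _

theorem IsHomogeneous.apply_zero_add_apply_one {φ : MvPolynomial (Fin 2) R} {i : ℕ}
    (hφ : φ.IsHomogeneous i) {m : Fin 2 →₀ ℕ} (hm : m ∈ φ.support) : m 0 + m 1 = i := by
  have : m.degree = i := by
    rw [Finsupp.degree_eq_weight_one]
    exact hφ (mem_support_iff.mp hm)
  rwa [Finsupp.degree_eq_sum, Fin.sum_univ_two] at this

theorem IsHomogeneous.contraction_apply {φ f : MvPolynomial (Fin 2) R} {i n : ℕ}
    (hφ : φ.IsHomogeneous i) (hf : f.IsHomogeneous n) : (φ ⌟ f).IsHomogeneous (n - i) := by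
  rw [contraction_apply_eq_sum]
  refine IsHomogeneous.sum _ _ _ fun m hm => ?_
  rw [smul_eq_C_mul]
  refine IsHomogeneous.C_mul ?_ _
  have := (hf.iterate_pderiv 1 (m 1)).iterate_pderiv 0 (m 0)
  rwa [Nat.sub_sub, add_comm, hφ.apply_zero_add_apply_one hm] at this

theorem IsHomogeneous.contraction_apply_eq_zero {φ f : MvPolynomial (Fin 2) R} {i n : ℕ}
    (hφ : φ.IsHomogeneous i) (hf : f.IsHomogeneous n) (h : n < i) : φ ⌟ f = 0 := by
  rw [contraction_apply_eq_sum]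
  refine Finset.sum_eq_zero fun m hm => ?_
  have hdeg := hφ.apply_zero_add_apply_one hm
  rcases lt_or_ge n (m 1) with h1 | h1
  · rw [hf.iterate_pderiv_eq_zero 1 h1, iterate_map_zero, smul_zero]
  · rw [(hf.iterate_pderiv 1 (m 1)).iterate_pderiv_eq_zero 0 (by omega), smul_zero]

theorem IsHomogeneous.exists_constantCoeff_contraction_apply_ne_zero {K : Type*} [Fintype σ]
    [Field K] [CharZero K] {M : ℕ} {g : MvPolynomial σ K} (hg : g.IsHomogeneous M) (hg0 : g ≠ 0) :
    ∃ ψ : MvPolynomial σ K, ψ.IsHomogeneous M ∧ constantCoeff (ψ ⌟ g) ≠ 0 := by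
  induction M generalizing g with
  | zero =>
    refine ⟨1, isHomogeneous_one σ K, ?_⟩
    have hC := totalDegree_eq_zero_iff_eq_C.mp (hg.totalDegree hg0)
    rw [map_one, OneMemClass.coe_one, Module.End.one_apply, constantCoeff_eq]
    exact fun h => hg0 (by rw [hC, h, C_0])
  | succ M ih =>
    obtain ⟨i, hi⟩ : ∃ i, pderiv i g ≠ 0 := by
      by_contra! h
      have := hg.sum_X_mul_pderiv
      simp only [h, mul_zero, Finset.sum_const_zero] at this
      exact hg0 (smul_eq_zero.mp this.symm |>.resolve_left (Nat.succ_ne_zero M))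
    obtain ⟨ψ, hψ, hψg⟩ := ih (by simpa using hg.pderiv (i := i)) hi
    exact ⟨ψ * X i, hψ.mul (isHomogeneous_X K i), by simpa using hψg⟩

theorem finrank_homogeneousSubmodule_fin_two (K : Type*) [Field K] (i : ℕ) :
    finrank K (homogeneousSubmodule (Fin 2) K i) = i + 1 := by
  rw [homogeneousSubmodule_eq_finsupp_supported]
  refine (finrank_eq_nat_card_basis
    (basisRestrictSupport K {d : Fin 2 →₀ ℕ | d.degree = i})).trans ?_
  let e : {d : Fin 2 →₀ ℕ | d.degree = i} ≃ Finset.HasAntidiagonal.antidiagonal i :=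
    (Finsupp.equivFunOnFinite.trans (finTwoArrowEquiv ℕ)).subtypeEquiv fun d => by
      simp [Finsupp.degree_eq_sum, Fin.sum_univ_two]
  rw [Nat.card_congr e, Nat.card_eq_fintype_card, Fintype.card_coe, Finset.Nat.card_antidiagonal]

instance {K : Type*} [Field K] [Finite σ] (i : ℕ) :
    FiniteDimensional K (homogeneousSubmodule σ K i) :=
  Module.Finite.iff_fg.mpr (homogeneousSubmodule_fg σ K i)

/-- The degree `i` part `(I_f)_i` of the apolar ideal of `f`. -/
def apolarComponent (f : MvPolynomial σ R) (i : ℕ) : Submodule R (MvPolynomial σ R) where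
  carrier := {φ | φ.IsHomogeneous i ∧ φ ⌟ f = 0}
  add_mem' ha hb := ⟨ha.1.add hb.1, by simp [ha.2, hb.2]⟩
  zero_mem' := ⟨isHomogeneous_zero σ R i, by simp⟩
  smul_mem' c _ ha := ⟨(homogeneousSubmodule σ R i).smul_mem c ha.1, by simp [ha.2]⟩

theorem mem_apolarComponent {f φ : MvPolynomial σ R} {i : ℕ} :
    φ ∈ apolarComponent f i ↔ φ.IsHomogeneous i ∧ φ ⌟ f = 0 :=
  Iff.rfl

theorem apolarComponent_le_homogeneousSubmodule (f : MvPolynomial σ R) (i : ℕ) :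
    apolarComponent f i ≤ homogeneousSubmodule σ R i :=
  fun _ hφ => hφ.1

instance {K : Type*} [Field K] [Finite σ] (f : MvPolynomial σ K) (i : ℕ) :
    FiniteDimensional K (apolarComponent f i) :=
  Submodule.finiteDimensional_of_le (apolarComponent_le_homogeneousSubmodule f i)

theorem apolarComponent_zero_eq_bot {K : Type*} [Field K] {f : MvPolynomial σ K} (hf : f ≠ 0) :
    apolarComponent f 0 = ⊥ := by
  refine eq_bot_iff.mpr fun φ ⟨hφ, hφf⟩ => ?_
  have hC : φ = C (coeff 0 φ) :=
    totalDegree_eq_zero_iff_eq_C.mp (by simpa using hφ.totalDegree_le)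
  rw [hC] at hφf ⊢
  rw [contraction_C_apply, smul_eq_zero] at hφf
  simp [hφf.resolve_right hf]

theorem apolarComponent_eq_homogeneousSubmodule {f : MvPolynomial (Fin 2) R} {n i : ℕ}
    (hf : f.IsHomogeneous n) (hi : n < i) :
    apolarComponent f i = homogeneousSubmodule (Fin 2) R i :=
  le_antisymm (apolarComponent_le_homogeneousSubmodule f i) fun _ hφ =>
    ⟨hφ, IsHomogeneous.contraction_apply_eq_zero hφ hf hi⟩

theorem map_mulLeft_X_not_le {K : Type*} [Field K] [IsAlgClosed K] {a b : σ} (hab : a ≠ b)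
    (V : Submodule K (MvPolynomial σ K)) [FiniteDimensional K V] (hV : V ≠ ⊥) :
    ¬ V.map (LinearMap.mulLeft K (X b)) ≤ V.map (LinearMap.mulLeft K (X a)) := by
  intro hle
  have : Nontrivial V := Submodule.nontrivial_iff_ne_bot.mpr hV
  let e := Submodule.equivMapOfInjective (LinearMap.mulLeft K (X a))
    (mul_right_injective₀ (X_ne_zero a)) V
  -- `T` is multiplication by `X b / X a`
  let T : Module.End K V := e.symm.toLinearMap ∘ₗ
    ((LinearMap.mulLeft K (X b)).comp V.subtype).codRestrict _ fun v => hle ⟨v, v.2, rfl⟩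
  obtain ⟨μ, hμ⟩ := T.exists_eigenvalue
  obtain ⟨v, hv⟩ := hμ.exists_hasEigenvector
  have hTv : X b * (v : MvPolynomial σ K) = μ • (X a * (v : MvPolynomial σ K)) := by
    have h : (e (T v) : MvPolynomial σ K) = X b * (v : MvPolynomial σ K) := by
      simp only [T, LinearMap.comp_apply, LinearEquiv.coe_coe, LinearEquiv.apply_symm_apply]
      rfl
    rw [hv.apply_eq_smul, map_smul, Submodule.coe_smul] at h
    exact h.symm
  have hne : X b - C μ * X a ≠ 0 := fun h => by
    classical
    simpa [hab] using congrArg (eval (Pi.single b 1)) h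
  refine hv.2 (Subtype.ext ((mul_eq_zero.mp ?_).resolve_left hne))
  rw [sub_mul, hTv, smul_eq_C_mul, mul_assoc, sub_self]

theorem finrank_apolarComponent_lt_succ {K : Type*} [Field K] [IsAlgClosed K] [Nontrivial σ]
    [Finite σ] {f : MvPolynomial σ K} {i : ℕ} (hi : apolarComponent f i ≠ ⊥) :
    finrank K (apolarComponent f i) < finrank K (apolarComponent f (i + 1)) := by
  obtain ⟨a, b, hab⟩ := exists_pair_ne σ
  set V := apolarComponent f i
  have hmul : ∀ c, V.map (LinearMap.mulLeft K (X c)) ≤ apolarComponent f (i + 1) := by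
    rintro c _ ⟨φ, ⟨hφ, hφf⟩, rfl⟩
    refine ⟨by simpa [add_comm] using (isHomogeneous_X K c).mul hφ, ?_⟩
    simp [hφf]
  calc finrank K V
      = finrank K (V.map (LinearMap.mulLeft K (X a))) :=
        (Submodule.equivMapOfInjective _ (mul_right_injective₀ (X_ne_zero a)) V).finrank_eq
    _ < finrank K ↥(V.map (LinearMap.mulLeft K (X a)) ⊔ V.map (LinearMap.mulLeft K (X b))) :=
        Submodule.finrank_lt_finrank_of_lt <| lt_of_le_of_ne le_sup_left fun h =>
          map_mulLeft_X_not_le hab V hi (h ▸ le_sup_right)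
    _ ≤ finrank K (apolarComponent f (i + 1)) :=
        Submodule.finrank_mono (sup_le (hmul a) (hmul b))

noncomputable def apolarPairing (f : MvPolynomial σ R) (i j : ℕ) :
    homogeneousSubmodule σ R i →ₗ[R] homogeneousSubmodule σ R j →ₗ[R] R :=
  LinearMap.mk₂ R
    (fun φ ψ => constantCoeff (((φ : MvPolynomial σ R) * (ψ : MvPolynomial σ R)) ⌟ f))
    (fun _ _ _ => by simp [add_mul]) (fun _ _ _ => by simp) (fun _ _ _ => by simp [mul_add])
    (fun _ _ _ => by simp)

theorem apolarPairing_flip (f : MvPolynomial σ R) (i j : ℕ) :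
    (apolarPairing f i j).flip = apolarPairing f j i :=
  LinearMap.ext₂ fun ψ φ => by
    simp only [apolarPairing, LinearMap.flip_apply, LinearMap.mk₂_apply]
    rw [mul_comm]

theorem ker_apolarPairing {K : Type*} [Field K] [CharZero K] {f : MvPolynomial (Fin 2) K}
    {i j : ℕ} (hf : f.IsHomogeneous (i + j)) :
    LinearMap.ker (apolarPairing f i j) =
      (apolarComponent f i).comap (homogeneousSubmodule (Fin 2) K i).subtype := by
  ext φ
  simp only [LinearMap.mem_ker, Submodule.mem_comap, Submodule.coe_subtype, mem_apolarComponent]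
  rw [and_iff_right (show (φ : MvPolynomial (Fin 2) K).IsHomogeneous i from φ.2)]
  constructor
  · intro h
    by_contra hne
    have hφf : (φ ⌟ f).IsHomogeneous j := by
      simpa using IsHomogeneous.contraction_apply φ.2 hf
    obtain ⟨ψ, hψ, hψφ⟩ := hφf.exists_constantCoeff_contraction_apply_ne_zero hne
    have := LinearMap.congr_fun h ⟨ψ, hψ⟩
    simp only [apolarPairing, LinearMap.mk₂_apply, LinearMap.zero_apply] at this
    rw [mul_comm, contraction_mul_apply] at this
    exact hψφ this
  · intro h
    ext ψ
    simp only [apolarPairing, LinearMap.mk₂_apply, LinearMap.zero_apply]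
    rw [mul_comm, contraction_mul_apply, h, map_zero, map_zero]

theorem add_one_add_finrank_apolarComponent_comm {K : Type*} [Field K] [CharZero K]
    {f : MvPolynomial (Fin 2) K} {i j : ℕ} (hf : f.IsHomogeneous (i + j)) :
    i + 1 + finrank K (apolarComponent f j) = j + 1 + finrank K (apolarComponent f i) := by
  have key := (apolarPairing f i j).finrank_add_finrank_ker_flip
  rw [apolarPairing_flip, ker_apolarPairing hf, ker_apolarPairing (add_comm i j ▸ hf),
    finrank_homogeneousSubmodule_fin_two, finrank_homogeneousSubmodule_fin_two,
    (Submodule.comapSubtypeEquivOfLe (apolarComponent_le_homogeneousSubmodule f i)).finrank_eq,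
    (Submodule.comapSubtypeEquivOfLe (apolarComponent_le_homogeneousSubmodule f j)).finrank_eq]
    at key
  exact key

theorem finrank_span_setOf_contractOp_eq_zero (f : MvPolynomial (Fin 2) ℂ) (i : ℕ) :
    finrank ℂ (Submodule.span ℂ {φ | φ.IsHomogeneous i ∧ contractOp φ f = 0}) =
      finrank ℂ (apolarComponent f i) := by
  have h : {φ | φ.IsHomogeneous i ∧ contractOp φ f = 0} = (apolarComponent f i : Set _) := by
    ext φ
    simp only [Set.mem_ofPred_eq, SetLike.mem_coe, mem_apolarComponent, contraction_apply_eq_sum]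
    rfl
  rw [h, Submodule.span_eq]

end MvPolynomial

theorem apply_add_sub_le_apply_of_pos {k : ℕ → ℕ} (hstep : ∀ i, 0 < k i → k i < k (i + 1)) {a b : ℕ}
    (ha : 0 < k a) (hab : a ≤ b) : k a + (b - a) ≤ k b := by
  induction b, hab using Nat.le_induction with
  | base => simp
  | succ b hab ih =>
    have := hstep b (by omega)
    omega

theorem exists_isGreatest_and_eq_min {k : ℕ → ℕ} {n : ℕ} (hzero : k 0 = 0)
    (hstep : ∀ i, 0 < k i → k i < k (i + 1)) (htop : ∀ i, n < i → k i = i + 1)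
    (hsym : ∀ i j, i + j = n → i + 1 + k j = j + 1 + k i) :
    ∃ d, IsGreatest (Set.range fun i => i + 1 - k i) d ∧
      ∀ i, i + 1 - k i = min (i + 1) (min d (n + 1 - i)) := by
  classical
  have hex : ∃ i, 0 < k i := ⟨n + 1, by rw [htop _ n.lt_succ_self]; omega⟩
  set d := Nat.find hex
  have hd : 0 < k d := Nat.find_spec hex
  have hlt : ∀ i < d, k i = 0 := fun i hi => Nat.eq_zero_of_not_pos (Nat.find_min hex hi)
  have hd0 : 0 < d := Nat.pos_of_ne_zero fun h => by rw [h, hzero] at hd; omega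
  have hdn : d ≤ n + 1 := Nat.find_min' hex (by rw [htop _ n.lt_succ_self]; omega)
  have hpos : ∀ a, d ≤ a → 0 < k a := fun a hda => by
    have := apply_add_sub_le_apply_of_pos hstep hd hda
    omega
  have hanti : ∀ a b, d ≤ a → a ≤ b → b + 1 - k b ≤ a + 1 - k a := fun a b hda hab => by
    have := apply_add_sub_le_apply_of_pos hstep (hpos a hda) hab
    omega
  -- the peak value `d` is reached at `d - 1` and, by symmetry, again at `n + 1 - d`
  have hpeak := hsym (d - 1) (n + 1 - d) (by omega)
  have hkpeak := hlt (d - 1) (by omega)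
  have hplateau : ∀ i, d ≤ i → i ≤ n + 1 - d → i + 1 - k i = d := fun i h1 h2 => by
    have := hanti i (n + 1 - d) h1 h2
    have := hanti d i le_rfl h1
    omega
  have hformula : ∀ i, i + 1 - k i = min (i + 1) (min d (n + 1 - i)) := by
    intro i
    by_cases h1 : i < d
    · have := hlt i h1; omega
    by_cases h2 : i ≤ n + 1 - d
    · have := hplateau i (by omega) h2; omega
    by_cases h3 : i ≤ n
    · have := hsym i (n - i) (by omega)
      have := hlt (n - i) (by omega)
      omega
    · have := htop i (by omega); omega
  refine ⟨d, ⟨⟨d - 1, ?_⟩, ?_⟩, hformula⟩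
  · dsimp only
    omega
  · rintro _ ⟨i, rfl⟩
    have := hformula i
    dsimp only
    omega

theorem hilbert_function_gorenstein (n s : ℕ)
    (f : MvPolynomial (Fin 2) ℂ) (hf0 : f ≠ 0) (hf : f.IsHomogeneous n)
    (hs : IsGreatest (Set.range fun i =>
      i + 1 - Module.finrank ℂ
        ↥(Submodule.span ℂ {φ : MvPolynomial (Fin 2) ℂ |
          φ.IsHomogeneous i ∧ contractOp φ f = 0})) s) :
    ∀ i : ℕ,
      i + 1 - Module.finrank ℂ
        ↥(Submodule.span ℂ {φ : MvPolynomial (Fin 2) ℂ |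
          φ.IsHomogeneous i ∧ contractOp φ f = 0})
        = min (i + 1) (min s (n + 1 - i)) := by
  simp only [finrank_span_setOf_contractOp_eq_zero] at hs ⊢
  obtain ⟨d, hd, hformula⟩ := exists_isGreatest_and_eq_min (n := n)
    (k := fun i => finrank ℂ (apolarComponent f i))
    (by simp [apolarComponent_zero_eq_bot hf0])
    (fun i hi => finrank_apolarComponent_lt_succ (Submodule.one_le_finrank_iff.mp hi))
    (fun i hi => by
      rw [apolarComponent_eq_homogeneousSubmodule hf hi, finrank_homogeneousSubmodule_fin_two])
    (fun i j hij => add_one_add_finrank_apolarComponent_comm (hij ▸ hf))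
  rw [hs.unique hd]
  exact hformula
end
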